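/- arXiv:1504.07813 — 3 statements merged into one kernel-verified Lean document; each statement's English description precedes it below -/
import Mathlib

section
/- Assume m′+d > r. For every path p ∈ X_d(m,m′): Q(p) = ∏_{i=1}^{d} ( ∏_{s=1}^{δ_i} C̄(m−l^{(s)}_i, k^{(s)}_i) ) · ( ∏_{s=δ_i+1}^{m−m′} C(m−l^{(s)}_i, |k^{(s)}_i| − 1) ). -/
/-!
Read `Q(p)` column by column. While the `i`-th entry is unbarred it moves by at most one per
step: a moving step contributes `1` and a stationary step `s` contributes `C̄(m - s, ·)`. Once it
is barred, the denominator of each step combines with the numerator of the next one into a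
monomial `C(m - s, ·)`. Condition (v) pins the `i`-th entry to its final value `(d - i + 1)‾`
during the last `i + m' - r - 1` steps; these steps are not among the `l^{(s)}_i`, and the
factors they leave over form a ratio `P_i / P_{i+1}` that telescopes to `1` across the columns.
-/

noncomputable section
open Matrix BigOperators

namespace CTypeMinors

/-- Standard basis vector of `ℂ^{2r}`, indexed by a natural number `a` (0-indexed):
`a = j - 1` encodes the unbarred element `j ∈ J`, and `a = 2r - j` encodes the barred
element `j̄ ∈ J` (this is the bijection `ι` shifted to be 0-indexed; the natural order
on `{0, …, 2r-1}` corresponds to the total order on `J`). -/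
def vv (r a : ℕ) : Fin (2*r) → ℂ := fun k => if (k : ℕ) = a then 1 else 0

/-- `v_j` for unbarred `j` (`1 ≤ j ≤ r`); note `vu r (r+1) = v_{r̄}`. -/
def vu (r j : ℕ) : Fin (2*r) → ℂ := vv r (j - 1)

/-- `v_{j̄}` for barred `j̄` (`1 ≤ j ≤ r`). -/
def vb (r j : ℕ) : Fin (2*r) → ℂ := vv r (2*r - j)

/-- The matrix `f_i` (`1 ≤ i ≤ r`): `f_i v_i = v_{i+1}`, `f_i v_{(i+1)‾} = v_{ī}`
(for `i = r` these two conditions both read `f_r v_r = v_{r̄}`), all other basis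
vectors are sent to `0`. -/
def fMat (r i : ℕ) : Matrix (Fin (2*r)) (Fin (2*r)) ℂ :=
  Matrix.of fun k l =>
    if ((l : ℕ) + 1 = i ∧ (k : ℕ) = i) ∨ ((l : ℕ) + i + 1 = 2*r ∧ (k : ℕ) + i = 2*r)
    then 1 else 0

/-- `e_i = f_iᵀ`. -/
def eMat (r i : ℕ) : Matrix (Fin (2*r)) (Fin (2*r)) ℂ := (fMat r i)ᵀ

/-- `x_i(t) = 1 + t e_i`. -/
def xMat (r i : ℕ) (t : ℂ) : Matrix (Fin (2*r)) (Fin (2*r)) ℂ := 1 + t • eMat r i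

/-- `y_i(t) = 1 + t f_i`. -/
def yMat (r i : ℕ) (t : ℂ) : Matrix (Fin (2*r)) (Fin (2*r)) ℂ := 1 + t • fMat r i

/-- `α_i^∨(c)`: diagonal, acting by `c` on `v_i, v_{(i+1)‾}`, by `c⁻¹` on
`v_{i+1}, v_{ī}`, and by `1` elsewhere (for `i = r`: by `c` on `v_r`, `c⁻¹` on `v_{r̄}`). -/
def alMat (r i : ℕ) (c : ℂ) : Matrix (Fin (2*r)) (Fin (2*r)) ℂ :=
  Matrix.diagonal fun k =>
    if (k : ℕ) + 1 = i ∨ (k : ℕ) + i + 1 = 2*r then c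
    else if (k : ℕ) = i ∨ (k : ℕ) + i = 2*r then c⁻¹
    else 1

/-- `x_{-i}(t) = y_i(t) ⬝ α_i^∨(t⁻¹)`. -/
def xmMat (r i : ℕ) (t : ℂ) : Matrix (Fin (2*r)) (Fin (2*r)) ℂ :=
  yMat r i t * alMat r i t⁻¹

/-- Entry of a `2r × 2r` matrix at (0-indexed) natural number indices. -/
def ent {r : ℕ} (X : Matrix (Fin (2*r)) (Fin (2*r)) ℂ) (a b : ℕ) : ℂ :=
  dotProduct (vv r a) (X.mulVec (vv r b))

/-- Ordered product `g 1 * g 2 * ⋯ * g n` of matrices. -/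
def oprod {N : ℕ} (g : ℕ → Matrix (Fin N) (Fin N) ℂ) (n : ℕ) : Matrix (Fin N) (Fin N) ℂ :=
  ((List.range n).map fun l => g (l + 1)).prod

/-- `x^L(Y) = (x_{-1}(Y_{1,1})⋯x_{-r}(Y_{1,r})) ⋯ x_{-1}(Y_{m,1})⋯x_{-d}(Y_{m,d})`. -/
def xL (r m d : ℕ) (Y : ℕ → ℕ → ℂ) : Matrix (Fin (2*r)) (Fin (2*r)) ℂ :=
  oprod (fun s => oprod (fun l => xmMat r l (Y s l)) (if s = m then d else r)) m

/-- The 0-indexed row `ι(R_i)` for `i : Fin d` (0-indexed `i`): the `i`-th entry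
of `R` is `v_{m'+1+i}` when `(i+1) + m' ≤ r` and `v_{(d-i)‾}` otherwise. -/
def rowR (r m' d i : ℕ) : ℕ := if i + 1 + m' ≤ r then m' + i else 2*r + i - d

/-- `Δ^L(Y)`: determinant of the `d × d` submatrix of `x^L(Y)` with rows `ι(R)` and
columns `1, …, d`. -/
def DeltaL (r m m' d : ℕ) (Y : ℕ → ℕ → ℂ) : ℂ :=
  (Matrix.of fun i j : Fin d => ent (xL r m d Y) (rowR r m' d (i : ℕ)) (j : ℕ)).det

/-- `C̄(l,k) = Y_{l,k-1}/Y_{l,k}`. -/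
def Cbar (Y : ℕ → ℕ → ℂ) (l k : ℕ) : ℂ := Y l (k - 1) / Y l k

/-- `C(l,k) = Y_{l,k+1}/Y_{l+1,k}`. -/
def Cc (Y : ℕ → ℕ → ℂ) (l k : ℕ) : ℂ := Y l (k + 1) / Y (l + 1) k

/-- `|·| : J → ℕ` in the 0-indexed natural encoding of `J`. -/
def absV (r p : ℕ) : ℕ := if p < r then p + 1 else 2*r - p


/-- `A` encodes a path `p ∈ X_d(m,m')` (Definition 6.2): `A s i` (for `0 ≤ s ≤ m`,
`1 ≤ i ≤ d`) is the 0-indexed natural encoding of `a^{(s)}_i ∈ J` (unbarred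
`j ↦ j - 1`, barred `j̄ ↦ 2r - j`; the order of `J` is the natural order, and an
element is barred iff its encoding is `≥ r`).  The five clauses are conditions
(i)+(ii), (iii), (iv) (twice) and (v) of Definition 6.2. -/
def IsPath (r m m' d : ℕ) (A : ℕ → ℕ → ℕ) : Prop :=
  (∀ s, s ≤ m → ∀ i, 1 ≤ i → i ≤ d → A s i < 2*r) ∧
  (∀ s, s ≤ m → ∀ i, 1 ≤ i → i < d → A s i < A s (i+1)) ∧
  (∀ s, s < m → ∀ i, 1 ≤ i → i ≤ d →
      (A s i + 1 < r → (A (s+1) i = A s i ∨ A (s+1) i = A s i + 1)) ∧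
      A s i ≤ A (s+1) i) ∧
  (∀ i, 1 ≤ i → i ≤ d → A 0 i = i - 1 ∧ A m i = rowR r m' d (i - 1)) ∧
  (∀ s, s < m → ∀ i, 1 ≤ i → i < d → r ≤ A (s+1) i →
      absV r (A s (i+1)) < absV r (A (s+1) i))

/-- The set `{l^{(1)}_i, …, l^{(m-m')}_i}` attached to (the `i`-th sequence of) a
path, as in (6.11), (6.12). -/
def lSet (r m m' : ℕ) (A : ℕ → ℕ → ℕ) (i : ℕ) : Finset ℕ :=
  if i + m' ≤ r then (Finset.range m).filter (fun s => A s i = A (s+1) i)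
  else (Finset.range (m + r + 1 - (i + m'))).filter
         (fun s => (A s i < r ∧ A s i = A (s+1) i) ∨ r ≤ A s i)

/-- `l^{(s)}_i` (for `1 ≤ s ≤ m-m'`): the `s`-th smallest element of `lSet`. -/
def lv (r m m' : ℕ) (A : ℕ → ℕ → ℕ) (i s : ℕ) : ℕ :=
  ((lSet r m m' A i).sort (· ≤ ·)).getD (s - 1) 0

/-- `k^{(s)}_i := a^{(l^{(s)}_i)}_i`. -/
def kv (r m m' : ℕ) (A : ℕ → ℕ → ℕ) (i s : ℕ) : ℕ := A (lv r m m' A i s) i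

/-- `δ_i`: the number of `s ∈ {1, …, m-m'}` with `k^{(s)}_i` unbarred. -/
def dv (r m m' : ℕ) (A : ℕ → ℕ → ℕ) (i : ℕ) : ℕ :=
  ((Finset.Icc 1 (m - m')).filter (fun s => kv r m m' A i s < r)).card

/-- The label `Q(p) = ∏_{s=0}^{m-1} Q^{(s)}(p)` of a path (Definition 6.4), for
paths encoded by `A : ℕ → ℕ → ℕ` (1-indexed `i`).  The three branches are the
per-entry factors of `Q^{(s)}(p)`: unbarred-to-unbarred `Y_{m-s,a^{(s+1)}_i-1}/Y_{m-s,a^{(s)}_i}`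
(covering also `Y* = Y_{m-s,r-1}/Y_{m-s,r}`), the factor `Y* = 1/Y_{m-s,|a^{(s+1)}_i|-1}`
(only possible when `a^{(s)}_i = r`), and the barred factor
`Y_{m-s,|a^{(s)}_i|}/Y_{m-s,|a^{(s+1)}_i|-1}`. -/
def QpathN (r m d : ℕ) (Y : ℕ → ℕ → ℂ) (A : ℕ → ℕ → ℕ) : ℂ :=
  ∏ s ∈ Finset.range m, ∏ i ∈ Finset.Icc 1 d,
    (if A s i < r
     then (if A (s+1) i < r
           then Y (m - s) (A (s+1) i) / Y (m - s) (A s i + 1)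
           else 1 / Y (m - s) (2*r - A (s+1) i - 1))
     else Y (m - s) (2*r - A s i) / Y (m - s) (2*r - A (s+1) i - 1))

end CTypeMinors

open Finset

theorem prod_Icc_div_succ {G : Type*} [CommGroupWithZero G] (g : ℕ → G) (n : ℕ)
    (hg : ∀ j ∈ Icc 1 (n + 1), g j ≠ 0) :
    ∏ j ∈ Icc 1 n, g j / g (j + 1) = g 1 / g (n + 1) := by
  induction n with
  | zero => simp [div_self (hg 1 (by simp))]
  | succ n ih =>
    rw [prod_Icc_succ_top (by omega), ih fun j hj => hg j (by simp at hj ⊢; omega),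
      div_mul_div_cancel₀ (hg (n + 1) (by simp))]

theorem le_card_filter_Icc_iff {P : ℕ → Prop} [DecidablePred P] {n s : ℕ}
    (hP : ∀ a b, 1 ≤ a → a ≤ b → b ≤ n → P b → P a) (hs : s ∈ Icc 1 n) :
    s ≤ #{a ∈ Icc 1 n | P a} ↔ P s := by
  rw [mem_Icc] at hs
  constructor
  · intro hle
    by_contra hs'
    have hsub : {a ∈ Icc 1 n | P a} ⊆ Icc 1 (s - 1) := by
      intro a ha
      simp only [mem_filter, mem_Icc] at ha ⊢
      by_contra! has
      exact hs' (hP s a hs.1 (by omega) ha.1.2 ha.2)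
    have := card_le_card hsub
    simp only [Nat.card_Icc] at this
    omega
  · intro hPs
    have hsub : Icc 1 s ⊆ {a ∈ Icc 1 n | P a} := by
      intro a ha
      simp only [mem_filter, mem_Icc] at ha ⊢
      exact ⟨⟨ha.1, ha.2.trans hs.2⟩, hP a s ha.1 ha.2 hs.2 hPs⟩
    simpa using card_le_card hsub

theorem prod_Icc_getD_sort {M : Type*} [CommMonoid M] (S : Finset ℕ) (f : ℕ → M) :
    ∏ s ∈ Icc 1 #S, f ((S.sort (· ≤ ·)).getD (s - 1) 0) = ∏ l ∈ S, f l := by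
  have hlen : (S.sort (· ≤ ·)).length = #S := length_sort _
  apply prod_bij (fun s _ => (S.sort (· ≤ ·)).getD (s - 1) 0)
  · intro s hs
    rw [mem_Icc] at hs
    rw [List.getD_eq_getElem _ _ (by omega), ← mem_sort (· ≤ ·)]
    exact List.getElem_mem _
  · intro s hs s' hs' heq
    rw [mem_Icc] at hs hs'
    rw [List.getD_eq_getElem _ _ (by omega), List.getD_eq_getElem _ _ (by omega),
      (sort_nodup S _).getElem_inj_iff] at heq
    omega
  · intro l hl
    obtain ⟨j, hj, rfl⟩ := List.getElem_of_mem ((mem_sort (· ≤ ·)).mpr hl)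
    exact ⟨j + 1, mem_Icc.mpr ⟨by omega, by omega⟩,
      by rw [Nat.add_sub_cancel, List.getD_eq_getElem _ _ hj]⟩
  · intros; rfl

theorem card_filter_apply_eq_apply_succ_add {c : ℕ → ℕ} {a b : ℕ} (hab : a ≤ b)
    (hstep : ∀ s ∈ Ico a b, c s ≤ c (s + 1) ∧ c (s + 1) ≤ c s + 1) :
    #{s ∈ Ico a b | c s = c (s + 1)} + c b = (b - a) + c a := by
  induction b, hab using Nat.le_induction with
  | base => simp
  | succ b hab ih =>
    have ih := ih fun s hs => hstep s (by simp at hs ⊢; omega)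
    have hb := hstep b (by simp; omega)
    rw [Nat.Ico_succ_right_eq_insert_Ico hab, filter_insert]
    split_ifs with hc
    · rw [card_insert_of_notMem (by simp)]
      omega
    · omega

theorem prod_Ico_eq_prod_mul_prod_succ {M : Type*} [CommMonoid M] {F N B : ℕ → M} {a b : ℕ}
    (hab : a < b) (ha : F a = B (a + 1)) (hF : ∀ s ∈ Ico (a + 1) b, F s = N s * B (s + 1)) :
    ∏ s ∈ Ico a b, F s = (∏ s ∈ Ico (a + 1) b, N s) * ∏ s ∈ Ico (a + 1) (b + 1), B s := by
  rw [prod_eq_prod_Ico_succ_bot hab, ha, prod_congr rfl hF, prod_mul_distrib,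
    prod_Ico_add' B, prod_eq_prod_Ico_succ_bot (by omega : a + 1 < b + 1) B]
  exact mul_left_comm _ _ _

namespace CTypeMinors

theorem min_le_min_add_of_step_le {r m : ℕ} {c : ℕ → ℕ}
    (hstep : ∀ s < m, c s + 1 < r → c (s + 1) ≤ c s + 1) {s t : ℕ} (h : s + t ≤ m) :
    min (c (s + t)) r ≤ min (c s) r + t := by
  induction t with
  | zero => simp
  | succ t ih =>
    have ih := ih (by omega)
    rw [← add_assoc]
    by_cases hc : c (s + t) + 1 < r
    · have := hstep (s + t) (by omega) hc
      omega
    · omega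

structure IsColumn (r m m' d i : ℕ) (c : ℕ → ℕ) : Prop where
  lt_two_mul : ∀ s ≤ m, c s < 2 * r
  monotone : ∀ s s', s ≤ s' → s' ≤ m → c s ≤ c s'
  step_le : ∀ s < m, c s + 1 < r → c (s + 1) ≤ c s + 1
  start : c 0 = i - 1
  last : c m = rowR r m' d (i - 1)
  eq_last : ∀ s ≤ m, m + r + 1 ≤ s + i + m' → c s = c m

structure CrossesAt (r m : ℕ) (c : ℕ → ℕ) (t : ℕ) : Prop where
  lt_of_le : ∀ s ≤ t, c s < r
  le_of_lt : ∀ s, t < s → s ≤ m → r ≤ c s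
  succ_eq : c t + 1 = r

namespace IsPath

variable {r m m' d i : ℕ} {A : ℕ → ℕ → ℕ}

theorem mono (hA : IsPath r m m' d A) (hi1 : 1 ≤ i) (hid : i ≤ d) {s s' : ℕ} (hss : s ≤ s')
    (hs' : s' ≤ m) : A s i ≤ A s' i := by
  induction s', hss using Nat.le_induction with
  | base => exact le_rfl
  | succ s' hss ih => exact (ih (by omega)).trans (hA.2.2.1 s' (by omega) i hi1 hid).2

theorem step_le (hA : IsPath r m m' d A) (hi1 : 1 ≤ i) (hid : i ≤ d) {s : ℕ} (hs : s < m)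
    (hsr : A s i + 1 < r) : A (s + 1) i ≤ A s i + 1 := by
  have := (hA.2.2.1 s hs i hi1 hid).1 hsr
  omega

/-- Condition (v) propagates the final barred entries backwards: during the last
`i + m' - r - 1` steps the `i`-th entry is already at its final value `(d - i + 1)‾`. -/
theorem rowR_le (hA : IsPath r m m' d A) (hm'm : m' ≤ m) (hmr : m ≤ r) (hdr : d ≤ r) {k : ℕ}
    (hi1 : 1 ≤ i) (hid : i ≤ d) (hk : r + 1 + k ≤ i + m') :
    rowR r m' d (i - 1) ≤ A (m - k) i := by
  induction k generalizing i with
  | zero => exact ((hA.2.2.2.1 i hi1 hid).2).ge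
  | succ k ih =>
    have hbar : 2 * r + i - 2 - d ≤ A (m - k) (i - 1) := by
      have := ih (i := i - 1) (by omega) (by omega) (by omega)
      simp only [rowR] at this
      split_ifs at this <;> omega
    have hmk : m - k = m - (k + 1) + 1 := by omega
    have hprev := hA.2.2.2.2 (m - (k + 1)) (by omega) (i - 1) (by omega) (by omega)
      (by rw [← hmk]; omega)
    rw [← hmk, show i - 1 + 1 = i by omega] at hprev
    -- rules out an unbarred entry at step `m - (k + 1)`: it could not reach a barred value by `m`
    have hclimb := min_le_min_add_of_step_le (fun s hs => hA.step_le hi1 hid hs)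
      (c := (A · i)) (m := m) (s := m - (k + 1)) (t := k + 1) (by omega)
    rw [show m - (k + 1) + (k + 1) = m by omega, (hA.2.2.2.1 i hi1 hid).2] at hclimb
    simp only [rowR, absV] at hprev hclimb ⊢
    split_ifs at hprev hclimb ⊢ <;> omega

theorem eq_last (hA : IsPath r m m' d A) (hm'm : m' ≤ m) (hmr : m ≤ r) (hdr : d ≤ r)
    (hi1 : 1 ≤ i) (hid : i ≤ d) {s : ℕ} (hsm : s ≤ m) (hs : m + r + 1 ≤ s + i + m') :
    A s i = A m i := by
  have hlow := hA.rowR_le hm'm hmr hdr (k := m - s) hi1 hid (by omega)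
  rw [show m - (m - s) = s by omega, ← (hA.2.2.2.1 i hi1 hid).2] at hlow
  exact le_antisymm (hA.mono hi1 hid hsm le_rfl) hlow

theorem isColumn (hA : IsPath r m m' d A) (hm'm : m' ≤ m) (hmr : m ≤ r) (hdr : d ≤ r)
    (hi1 : 1 ≤ i) (hid : i ≤ d) : IsColumn r m m' d i (A · i) where
  lt_two_mul s hs := hA.1 s hs i hi1 hid
  monotone _ _ hss hs' := hA.mono hi1 hid hss hs'
  step_le _ hs hsr := hA.step_le hi1 hid hs hsr
  start := (hA.2.2.2.1 i hi1 hid).1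
  last := (hA.2.2.2.1 i hi1 hid).2
  eq_last _ hsm hs := hA.eq_last hm'm hmr hdr hi1 hid hsm hs

end IsPath

/-- The factor of `Q(p)` contributed at step `s` by an entry whose trajectory is `c`. -/
def labelFactor (r m : ℕ) (Y : ℕ → ℕ → ℂ) (c : ℕ → ℕ) (s : ℕ) : ℂ :=
  if c s < r
  then (if c (s + 1) < r
        then Y (m - s) (c (s + 1)) / Y (m - s) (c s + 1)
        else 1 / Y (m - s) (2 * r - c (s + 1) - 1))
  else Y (m - s) (2 * r - c s) / Y (m - s) (2 * r - c (s + 1) - 1)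

def monomialFactor (r m : ℕ) (Y : ℕ → ℕ → ℂ) (c : ℕ → ℕ) (l : ℕ) : ℂ :=
  if c l < r then Cbar Y (m - l) (c l + 1) else Cc Y (m - l) (2 * r - c l - 1)

/-- The factors of `Q(p)` that the frozen final stretch of column `i` leaves over are
`tailWeight i / tailWeight (i + 1)`. -/
def tailWeight (r m' d : ℕ) (Y : ℕ → ℕ → ℂ) (i : ℕ) : ℂ :=
  ∏ t ∈ Ico 1 (i + m' - r), Y t (d + 1 - i)

theorem prod_Icc_tailWeight_div_succ {r m m' d : ℕ} (hm'm : m' ≤ m) (hmr : m ≤ r) (hdr : d ≤ r)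
    {Y : ℕ → ℕ → ℂ} (hY0 : ∀ s, Y s 0 = 1)
    (hYne : ∀ s l, 1 ≤ s → s ≤ m → 1 ≤ l → l ≤ r → Y s l ≠ 0) :
    ∏ i ∈ Icc 1 d, tailWeight r m' d Y i / tailWeight r m' d Y (i + 1) = 1 := by
  have hne : ∀ i ∈ Icc 1 (d + 1), tailWeight r m' d Y i ≠ 0 := by
    intro i hi
    rw [mem_Icc] at hi
    refine prod_ne_zero_iff.mpr fun t ht => ?_
    rw [mem_Ico] at ht
    rcases hi.2.lt_or_eq with hid | rfl
    · exact hYne t (d + 1 - i) ht.1 (by omega) (by omega) (by omega)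
    · simp [hY0]
  rw [prod_Icc_div_succ _ d hne, tailWeight, tailWeight,
    Ico_eq_empty_of_le (by omega : 1 + m' - r ≤ 1)]
  simp [hY0]

theorem lSet_eq_of_crossesAt {r m m' i t : ℕ} {c : ℕ → ℕ} (hbig : r < i + m')
    (ht : CrossesAt r m c t) (htM : t < m + r + 1 - (i + m')) :
    lSet r m m' (fun s _ => c s) i =
      {s ∈ range t | c s = c (s + 1)} ∪ Ico (t + 1) (m + r + 1 - (i + m')) := by
  rw [lSet, if_neg (by omega)]
  ext s
  simp only [mem_filter, mem_range, mem_union, mem_Ico]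
  have := ht.lt_of_le s
  have := ht.lt_of_le (s + 1)
  have := ht.le_of_lt s
  have := ht.le_of_lt (s + 1)
  have := ht.succ_eq
  constructor <;> intro h <;> omega

namespace IsColumn

variable {r m m' d i : ℕ} {c : ℕ → ℕ} {Y : ℕ → ℕ → ℂ}

theorem lt_of_add_le (hc : IsColumn r m m' d i c) (hi1 : 1 ≤ i) (h : i + m' ≤ r) {s : ℕ}
    (hs : s ≤ m) : c s < r := by
  have := hc.monotone s m hs le_rfl
  rw [hc.last, rowR, if_pos (by omega)] at this
  omega

theorem step_of_lt (hc : IsColumn r m m' d i c) {b : ℕ} (hb : b ≤ m) (hlt : ∀ s ≤ b, c s < r) :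
    ∀ s ∈ Ico 0 b, c s ≤ c (s + 1) ∧ c (s + 1) ≤ c s + 1 := by
  intro s hs
  rw [mem_Ico] at hs
  refine ⟨hc.monotone s (s + 1) (by omega) (by omega), ?_⟩
  by_cases hsr : c s + 1 < r
  · exact hc.step_le s (by omega) hsr
  · have := hlt (s + 1) (by omega)
    omega

theorem prod_range_labelFactor_of_lt (hc : IsColumn r m m' d i c)
    (hYne : ∀ s l, 1 ≤ s → s ≤ m → 1 ≤ l → l ≤ r → Y s l ≠ 0) {b : ℕ} (hb : b ≤ m)
    (hlt : ∀ s ≤ b, c s < r) :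
    ∏ s ∈ range b, labelFactor r m Y c s =
      ∏ l ∈ range b with c l = c (l + 1), monomialFactor r m Y c l := by
  rw [← prod_filter_mul_prod_filter_not (range b) (fun s => c s = c (s + 1))]
  have hmoving : ∏ s ∈ range b with ¬c s = c (s + 1), labelFactor r m Y c s = 1 := by
    refine prod_eq_one fun s hs => ?_
    rw [mem_filter, mem_range] at hs
    have hstep := hc.step_of_lt hb hlt s (by simp; omega)
    have hsucc := hlt (s + 1) (by omega)
    rw [labelFactor, if_pos (hlt s (by omega)), if_pos hsucc, show c (s + 1) = c s + 1 by omega]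
    exact div_self (hYne _ _ (by omega) (by omega) (by omega) (by omega))
  rw [hmoving, mul_one]
  refine prod_congr rfl fun l hl => ?_
  rw [mem_filter, mem_range] at hl
  rw [labelFactor, monomialFactor, Cbar, if_pos (hlt l (by omega)), if_pos (hlt (l + 1) (by omega)),
    if_pos (hlt l (by omega)), ← hl.2, Nat.add_sub_cancel]

theorem exists_crossesAt (hc : IsColumn r m m' d i c) (hi1 : 1 ≤ i) (hid : i ≤ d) (hdr : d ≤ r)
    (hbig : r < i + m') : ∃ t < m + r + 1 - (i + m'), CrossesAt r m c t := by
  have hlast : r ≤ c (m + r + 1 - (i + m')) := by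
    rw [hc.eq_last _ (by omega) (by omega), hc.last, rowR, if_neg (by omega)]
    omega
  have hex : ∃ s, r ≤ c s := ⟨m + r + 1 - (i + m'), hlast⟩
  obtain ⟨T, hT, hTmin⟩ : ∃ T, r ≤ c T ∧ ∀ s < T, c s < r :=
    ⟨Nat.find hex, Nat.find_spec hex, fun s hs => not_le.mp (Nat.find_min hex hs)⟩
  have hTM : T ≤ m + r + 1 - (i + m') := by
    by_contra! h
    exact absurd hlast (not_le.mpr (hTmin _ h))
  have hpos : 0 < T := by
    refine Nat.pos_of_ne_zero fun h0 => ?_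
    rw [h0, hc.start] at hT
    omega
  refine ⟨T - 1, by omega, fun s hs => hTmin s (by omega),
    fun s hs hsm => hT.trans (hc.monotone _ _ (by omega) hsm), ?_⟩
  have hbefore := hTmin (T - 1) (by omega)
  by_contra hne
  have := hc.step_le (T - 1) (by omega) (by omega)
  rw [Nat.sub_add_cancel hpos] at this
  omega

theorem card_lSet (hc : IsColumn r m m' d i c) (hi1 : 1 ≤ i) (hid : i ≤ d) (hdr : d ≤ r) :
    #(lSet r m m' (fun s _ => c s) i) = m - m' := by
  have hstart := hc.start
  by_cases hsmall : i + m' ≤ r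
  · have hlt : ∀ s ≤ m, c s < r := fun s hs => hc.lt_of_add_le hi1 hsmall hs
    have hcount := card_filter_apply_eq_apply_succ_add (Nat.zero_le m) (hc.step_of_lt le_rfl hlt)
    have hlast := hc.last
    rw [rowR, if_pos (by omega)] at hlast
    rw [lSet, if_pos hsmall, range_eq_Ico]
    omega
  · obtain ⟨t, htM, ht⟩ := hc.exists_crossesAt hi1 hid hdr (by omega)
    have hcount := card_filter_apply_eq_apply_succ_add (Nat.zero_le t)
      (hc.step_of_lt (by omega) ht.lt_of_le)
    have := ht.succ_eq
    rw [lSet_eq_of_crossesAt (by omega) ht htM, card_union_of_disjoint, Nat.card_Ico,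
      range_eq_Ico]
    · omega
    · exact disjoint_left.mpr fun s hs hs' => by simp at hs hs'; omega

theorem two_mul_sub_eq (hc : IsColumn r m m' d i c) (hi1 : 1 ≤ i) (hdr : d ≤ r)
    (hbig : r < i + m') {s : ℕ} (hsm : s ≤ m) (hs : m + r + 1 ≤ s + i + m') :
    2 * r - c s = d + 1 - i := by
  rw [hc.eq_last s hsm hs, hc.last, rowR, if_neg (by omega)]
  omega

theorem prod_Ico_eq_tailWeight (hc : IsColumn r m m' d i c) (hm'm : m' ≤ m) (hi1 : 1 ≤ i)
    (hid : i ≤ d) (hdr : d ≤ r) (hbig : r < i + m') :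
    ∏ s ∈ Ico (m + r + 1 - (i + m')) m, Y (m - s) (2 * r - c s) = tailWeight r m' d Y i := by
  calc ∏ s ∈ Ico (m + r + 1 - (i + m')) m, Y (m - s) (2 * r - c s)
      = ∏ s ∈ Ico (m + r + 1 - (i + m')) m, Y (m - s) (d + 1 - i) := by
        refine prod_congr rfl fun s hs => ?_
        rw [mem_Ico] at hs
        rw [hc.two_mul_sub_eq hi1 hdr hbig hs.2.le (by omega)]
    _ = ∏ t ∈ Ico (m + 1 - m) (m + 1 - (m + r + 1 - (i + m'))), Y t (d + 1 - i) :=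
        prod_Ico_reflect (fun t => Y t (d + 1 - i)) _ (Nat.le_succ m)
    _ = tailWeight r m' d Y i := by
        rw [tailWeight, Nat.add_sub_cancel_left]
        congr 2
        omega

theorem prod_Ico_inv_eq_tailWeight_succ (hc : IsColumn r m m' d i c) (hm'm : m' ≤ m)
    (hi1 : 1 ≤ i) (hid : i ≤ d) (hdr : d ≤ r) (hbig : r < i + m') :
    ∏ l ∈ Ico (m + r + 1 - (i + m')) (m + 1), (Y (m + 1 - l) (2 * r - c l - 1))⁻¹ =
      (tailWeight r m' d Y (i + 1))⁻¹ := by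
  rw [prod_inv_distrib]
  congr 1
  calc ∏ l ∈ Ico (m + r + 1 - (i + m')) (m + 1), Y (m + 1 - l) (2 * r - c l - 1)
      = ∏ l ∈ Ico (m + r + 1 - (i + m')) (m + 1), Y (m + 1 - l) (d - i) := by
        refine prod_congr rfl fun l hl => ?_
        rw [mem_Ico] at hl
        rw [hc.two_mul_sub_eq hi1 hdr hbig (by omega) (by omega)]
        congr 1
        omega
    _ = ∏ t ∈ Ico (m + 1 + 1 - (m + 1)) (m + 1 + 1 - (m + r + 1 - (i + m'))), Y t (d - i) :=
        prod_Ico_reflect (fun t => Y t (d - i)) _ (Nat.le_succ (m + 1))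
    _ = tailWeight r m' d Y (i + 1) := by
        rw [tailWeight, Nat.add_sub_cancel_left, Nat.add_sub_add_right]
        congr 2
        omega

theorem prod_Ico_labelFactor_of_crossesAt (hc : IsColumn r m m' d i c) (hm'm : m' ≤ m)
    (hi1 : 1 ≤ i) (hid : i ≤ d) (hdr : d ≤ r) (hbig : r < i + m') {t : ℕ}
    (ht : CrossesAt r m c t) (htM : t < m + r + 1 - (i + m')) :
    ∏ s ∈ Ico t m, labelFactor r m Y c s =
      (∏ l ∈ Ico (t + 1) (m + r + 1 - (i + m')), monomialFactor r m Y c l) *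
        (tailWeight r m' d Y i / tailWeight r m' d Y (i + 1)) := by
  set M := m + r + 1 - (i + m')
  set N : ℕ → ℂ := fun s => Y (m - s) (2 * r - c s)
  set B : ℕ → ℂ := fun l => (Y (m + 1 - l) (2 * r - c l - 1))⁻¹
  have hcross : labelFactor r m Y c t = B (t + 1) := by
    have := ht.le_of_lt (t + 1) (by omega) (by omega)
    simp only [B, labelFactor, if_pos (ht.lt_of_le t le_rfl), if_neg (by omega : ¬c (t + 1) < r),
      one_div, show m + 1 - (t + 1) = m - t by omega]
  have hbarred : ∀ s ∈ Ico (t + 1) m, labelFactor r m Y c s = N s * B (s + 1) := by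
    intro s hs
    rw [mem_Ico] at hs
    have := ht.le_of_lt s (by omega) (by omega)
    simp only [N, B, labelFactor, if_neg (by omega : ¬c s < r), div_eq_mul_inv,
      show m + 1 - (s + 1) = m - s by omega]
  have hmonomial : ∀ l ∈ Ico (t + 1) M, monomialFactor r m Y c l = N l * B l := by
    intro l hl
    rw [mem_Ico] at hl
    have := ht.le_of_lt l (by omega) (by omega)
    have := hc.lt_two_mul l (by omega)
    simp only [N, B, monomialFactor, if_neg (by omega : ¬c l < r), Cc, div_eq_mul_inv,
      show 2 * r - c l - 1 + 1 = 2 * r - c l by omega, show m - l + 1 = m + 1 - l by omega]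
  rw [prod_Ico_eq_prod_mul_prod_succ (by omega) hcross hbarred,
    ← prod_Ico_consecutive N (show t + 1 ≤ M by omega) (show M ≤ m by omega),
    ← prod_Ico_consecutive B (show t + 1 ≤ M by omega) (show M ≤ m + 1 by omega),
    prod_Ico_eq_tailWeight hc hm'm hi1 hid hdr hbig,
    prod_Ico_inv_eq_tailWeight_succ hc hm'm hi1 hid hdr hbig,
    prod_congr rfl hmonomial, prod_mul_distrib]
  ring

theorem prod_range_labelFactor (hc : IsColumn r m m' d i c) (hm'm : m' ≤ m) (hi1 : 1 ≤ i)
    (hid : i ≤ d) (hdr : d ≤ r) (hYne : ∀ s l, 1 ≤ s → s ≤ m → 1 ≤ l → l ≤ r → Y s l ≠ 0) :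
    ∏ s ∈ range m, labelFactor r m Y c s =
      (∏ l ∈ lSet r m m' (fun s _ => c s) i, monomialFactor r m Y c l) *
        (tailWeight r m' d Y i / tailWeight r m' d Y (i + 1)) := by
  by_cases hsmall : i + m' ≤ r
  · have hlt : ∀ s ≤ m, c s < r := fun s hs => hc.lt_of_add_le hi1 hsmall hs
    rw [lSet, if_pos hsmall, hc.prod_range_labelFactor_of_lt hYne le_rfl hlt, tailWeight,
      tailWeight, Ico_eq_empty_of_le (by omega : i + m' - r ≤ 1),
      Ico_eq_empty_of_le (by omega : i + 1 + m' - r ≤ 1)]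
    simp
  · obtain ⟨t, htM, ht⟩ := hc.exists_crossesAt hi1 hid hdr (by omega)
    rw [← prod_range_mul_prod_Ico _ (by omega : t ≤ m),
      hc.prod_range_labelFactor_of_lt hYne (by omega) ht.lt_of_le,
      hc.prod_Ico_labelFactor_of_crossesAt hm'm hi1 hid hdr (by omega) ht htM,
      lSet_eq_of_crossesAt (by omega) ht htM, prod_union, mul_assoc]
    exact disjoint_left.mpr fun s hs hs' => by simp at hs hs'; omega

end IsColumn

section Enumeration

variable {r m m' i : ℕ} {A : ℕ → ℕ → ℕ}

theorem lSet_subset_range : lSet r m m' A i ⊆ range m := by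
  intro s hs
  rw [lSet] at hs
  split_ifs at hs <;> simp only [mem_filter, mem_range] at hs ⊢ <;> omega

theorem lv_mem {s : ℕ} (hs : s ∈ Icc 1 #(lSet r m m' A i)) :
    lv r m m' A i s ∈ lSet r m m' A i := by
  rw [mem_Icc] at hs
  rw [lv, List.getD_eq_getElem _ _ (by rw [length_sort]; omega), ← mem_sort (· ≤ ·)]
  exact List.getElem_mem _

theorem lv_le_lv {s s' : ℕ} (hss' : s ≤ s') (hs' : s' ≤ #(lSet r m m' A i)) (hs : 1 ≤ s) :
    lv r m m' A i s ≤ lv r m m' A i s' := by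
  have hlen : ((lSet r m m' A i).sort (· ≤ ·)).length = #(lSet r m m' A i) := length_sort _
  rw [lv, lv, List.getD_eq_getElem _ _ (by omega), List.getD_eq_getElem _ _ (by omega)]
  exact (sortedLT_sort _).sortedLE.getElem_le_getElem_of_le (by omega)

theorem le_dv_iff (hmono : ∀ s s', s ≤ s' → s' ≤ m → A s i ≤ A s' i)
    (hcard : #(lSet r m m' A i) = m - m') {s : ℕ} (hs : s ∈ Icc 1 (m - m')) :
    s ≤ dv r m m' A i ↔ kv r m m' A i s < r := by
  refine le_card_filter_Icc_iff (fun a b ha hab hb hkb => lt_of_le_of_lt ?_ hkb) hs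
  have hb_mem := lv_mem (r := r) (m := m) (m' := m') (A := A) (i := i) (s := b)
    (by rw [hcard, mem_Icc]; omega)
  have := mem_range.mp (lSet_subset_range hb_mem)
  exact hmono _ _ (lv_le_lv hab (by omega) ha) this.le

theorem prod_Icc_ite_eq_prod_lSet (Y : ℕ → ℕ → ℂ)
    (hmono : ∀ s s', s ≤ s' → s' ≤ m → A s i ≤ A s' i) (hcard : #(lSet r m m' A i) = m - m') :
    ∏ s ∈ Icc 1 (m - m'),
        (if s ≤ dv r m m' A i
         then Cbar Y (m - lv r m m' A i s) (kv r m m' A i s + 1)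
         else Cc Y (m - lv r m m' A i s) (2 * r - kv r m m' A i s - 1)) =
      ∏ l ∈ lSet r m m' A i, monomialFactor r m Y (A · i) l := by
  rw [← prod_Icc_getD_sort (lSet r m m' A i), hcard]
  refine prod_congr rfl fun s hs => ?_
  simp only [le_dv_iff hmono hcard hs]
  rfl

end Enumeration

theorem path_label_formula_general
    (r m m' d : ℕ) (hm'm : m' ≤ m) (hmr : m ≤ r)
    (hdr : d ≤ r)
    (Y : ℕ → ℕ → ℂ)
    (hY0 : ∀ s, Y s 0 = 1)
    (hYne : ∀ s l, 1 ≤ s → s ≤ m → 1 ≤ l → l ≤ r → Y s l ≠ 0)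
    (A : ℕ → ℕ → ℕ) (hA : IsPath r m m' d A) :
    QpathN r m d Y A =
      ∏ i ∈ Finset.Icc 1 d, ∏ s ∈ Finset.Icc 1 (m - m'),
        (if s ≤ dv r m m' A i
         then Cbar Y (m - lv r m m' A i s) (kv r m m' A i s + 1)
         else Cc Y (m - lv r m m' A i s) (2*r - kv r m m' A i s - 1)) := by
  have hcol : ∀ i ∈ Icc 1 d, IsColumn r m m' d i (A · i) := fun i hi =>
    hA.isColumn hm'm hmr hdr (mem_Icc.mp hi).1 (mem_Icc.mp hi).2
  calc QpathN r m d Y A = ∏ i ∈ Icc 1 d, ∏ s ∈ range m, labelFactor r m Y (A · i) s := prod_comm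
    _ = ∏ i ∈ Icc 1 d, (∏ l ∈ lSet r m m' A i, monomialFactor r m Y (A · i) l) *
          (tailWeight r m' d Y i / tailWeight r m' d Y (i + 1)) :=
        prod_congr rfl fun i hi =>
          (hcol i hi).prod_range_labelFactor hm'm (mem_Icc.mp hi).1 (mem_Icc.mp hi).2 hdr hYne
    _ = ∏ i ∈ Icc 1 d, ∏ l ∈ lSet r m m' A i, monomialFactor r m Y (A · i) l := by
        rw [prod_mul_distrib, prod_Icc_tailWeight_div_succ hm'm hmr hdr hY0 hYne, mul_one]
    _ = _ := prod_congr rfl fun i hi => (prod_Icc_ite_eq_prod_lSet Y (hcol i hi).monotone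
          ((hcol i hi).card_lSet (mem_Icc.mp hi).1 (mem_Icc.mp hi).2 hdr)).symm

theorem path_label_formula
    (r m m' d : ℕ) (hr : 2 ≤ r) (hm'1 : 1 ≤ m') (hm'm : m' ≤ m) (hmr : m ≤ r)
    (hd1 : 1 ≤ d) (hdr : d ≤ r) (hbig : r < m' + d)
    (Y : ℕ → ℕ → ℂ)
    (hY0 : ∀ s, Y s 0 = 1) (hYr1 : ∀ s, Y s (r+1) = 1) (hYm : ∀ l, d < l → Y m l = 1)
    (hYne : ∀ s l, 1 ≤ s → s ≤ m → 1 ≤ l → l ≤ r → Y s l ≠ 0)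
    (A : ℕ → ℕ → ℕ) (hA : IsPath r m m' d A) :
    QpathN r m d Y A =
      ∏ i ∈ Finset.Icc 1 d, ∏ s ∈ Finset.Icc 1 (m - m'),
        (if s ≤ dv r m m' A i
         then Cbar Y (m - lv r m m' A i s) (kv r m m' A i s + 1)
         else Cc Y (m - lv r m m' A i s) (2*r - kv r m m' A i s - 1)) :=
  path_label_formula_general r m m' d hm'm hmr hdr Y hY0 hYne A hA

end CTypeMinors
end
end

section
/- Assume m′+d > r. For every family (K^{(s)}_i)_{1≤s≤m−m′, 1≤i≤d} of elements of J satisfying (*), there exists a path p ∈ X_d(m,m′) whose associated data satisfies k^{(s)}_i = K^{(s)}_i for all 1 ≤ s ≤ m−m′ and 1 ≤ i ≤ d. -/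
/-!
Strand `i` of the path starts at `i` and climbs one step at a time, except that it stays put
once at each unbarred value `K^{(t)}_i`, namely at time `K^{(t)}_i + t - i`; there are `δ_i` such
values, `δ_i` being the number of unbarred entries of the `i`-th column of `K`. After these
pauses it reaches `r` at time `r + δ_i - i`, from then on it sits at the barred value
`K^{(s+i-r)}_i` at time `s`, and at the end it jumps to `R_i`. The times collected in the
`l_i` are then exactly the pause times and the barred times, `min(K^{(t)}_i, r) + t - i` for
`t = 1, …, m - m'`; they increase with `t`, so the `t`-th of them carries the value `K^{(t)}_i`.
Conditions (ii) and (v) on the path follow from the strict increase of `K^{(t)}_i` in `i`,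
which makes `δ_i` and the number of pauses before a given time weakly decrease in `i`.
-/

noncomputable section
open Matrix BigOperators

open Finset

theorem add_sub_le_of_lt_succ {f : ℕ → ℕ} {a b : ℕ}
    (hf : ∀ k, a ≤ k → k < b → f k < f (k + 1)) (hab : a ≤ b) : f a + (b - a) ≤ f b := by
  induction b, hab using Nat.le_induction with
  | base => simp
  | succ n han ih =>
    have := hf n han n.lt_succ_self
    have := ih fun k hk hkn => hf k hk (by omega)
    omega

theorem Finset.le_card_filter_Icc_iff {n t : ℕ} {p : ℕ → Prop} [DecidablePred p]
    (hp : ∀ a b, 1 ≤ a → a ≤ b → b ≤ n → p b → p a) (ht1 : 1 ≤ t) (htn : t ≤ n) :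
    t ≤ #{u ∈ Icc 1 n | p u} ↔ p t := by
  constructor
  · intro hcard
    by_contra hpt
    have hsub : {u ∈ Icc 1 n | p u} ⊆ Icc 1 (t - 1) := fun u hu => by
      simp only [mem_filter, mem_Icc] at hu ⊢
      refine ⟨hu.1.1, ?_⟩
      by_contra hut
      exact hpt (hp t u ht1 (by omega) hu.1.2 hu.2)
    have := card_le_card hsub
    simp only [Nat.card_Icc] at this
    omega
  · intro hpt
    have hsub : Icc 1 t ⊆ {u ∈ Icc 1 n | p u} := fun u hu => by
      simp only [mem_filter, mem_Icc] at hu ⊢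
      exact ⟨⟨hu.1, hu.2.trans htn⟩, hp u t hu.1 hu.2 htn hpt⟩
    simpa using card_le_card hsub

theorem Finset.getD_sort_image_Icc {f : ℕ → ℕ} {n j : ℕ} (hf : StrictMonoOn f (Set.Icc 1 n))
    (hj1 : 1 ≤ j) (hjn : j ≤ n) : (((Icc 1 n).image f).sort (· ≤ ·)).getD (j - 1) 0 = f j := by
  have hcard : #((Icc 1 n).image f) = n := by
    rw [card_image_of_injOn (by simpa using hf.injOn), Nat.card_Icc, Nat.add_sub_cancel]
  have hg : (fun k : Fin n => f (k + 1)) = ((Icc 1 n).image f).orderEmbOfFin hcard :=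
    orderEmbOfFin_unique hcard (fun k => mem_image_of_mem f (by simp))
      (fun a b hab => hf (by simp) (by simp) (by simpa using hab))
  have := congrFun hg ⟨j - 1, by omega⟩
  simp only [orderEmbOfFin_apply, Fin.getElem_fin, Nat.sub_add_cancel hj1] at this
  rw [List.getD_eq_getElem _ _ (by simp [hcard]; omega), ← this]

namespace CTypeMinors

structure IsStarFamily (r m m' d : ℕ) (K : ℕ → ℕ → ℕ) : Prop where
  lt_two_mul : ∀ s, 1 ≤ s → s ≤ m - m' → ∀ i, 1 ≤ i → i ≤ d → K s i < 2*r
  lt_succ : ∀ s, 1 ≤ s → s ≤ m - m' → ∀ i, 1 ≤ i → i < d → K s i < K s (i+1)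
  le_succ : ∀ i, 1 ≤ i → i ≤ d → ∀ s, 1 ≤ s → s < m - m' → K s i ≤ K (s+1) i
  add_one_le : ∀ i, 1 ≤ i → i + m' ≤ r → ∀ s, 1 ≤ s → s ≤ m - m' → K s i + 1 ≤ m' + i

def unbarredCount (r μ : ℕ) (K : ℕ → ℕ → ℕ) (i : ℕ) : ℕ := #{t ∈ Icc 1 μ | K t i < r}

def pauseCount (r μ : ℕ) (K : ℕ → ℕ → ℕ) (i s : ℕ) : ℕ :=
  #{t ∈ Icc 1 μ | K t i < r ∧ K t i + t < s + i}

def pauseTime (r : ℕ) (K : ℕ → ℕ → ℕ) (i t : ℕ) : ℕ := min (K t i) r + t - i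

def starPath (r m m' d : ℕ) (K : ℕ → ℕ → ℕ) (s i : ℕ) : ℕ :=
  if s + i ≤ r + unbarredCount r (m - m') K i then i - 1 + s - pauseCount r (m - m') K i s
  else if s + i ≤ m + r - m' then K (s + i - r) i
  else 2 * r + i - 1 - d

variable {r m m' d : ℕ} {K : ℕ → ℕ → ℕ} {i s t : ℕ}

theorem unbarredCount_le (μ : ℕ) : unbarredCount r μ K i ≤ μ :=
  (card_filter_le _ _).trans (by simp)

theorem pauseCount_le_unbarredCount (μ : ℕ) : pauseCount r μ K i s ≤ unbarredCount r μ K i :=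
  card_le_card (monotone_filter_right _ fun _ _ h => h.1)

theorem pauseCount_succ (μ : ℕ) : pauseCount r μ K i (s + 1) =
    pauseCount r μ K i s + #{t ∈ Icc 1 μ | K t i < r ∧ K t i + t = s + i} := by
  rw [pauseCount, pauseCount, ← card_union_of_disjoint]
  · congr 1
    ext t
    simp only [mem_filter, mem_union, ← and_or_left]
    refine and_congr_right fun _ => and_congr_right fun _ => ?_
    omega
  · exact disjoint_filter.2 fun _ _ h₁ h₂ => by omega

theorem absV_of_le {p : ℕ} (h : r ≤ p) : absV r p = 2 * r - p := if_neg h.not_gt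

theorem starPath_of_le (h : s + i ≤ r + unbarredCount r (m - m') K i) :
    starPath r m m' d K s i = i - 1 + s - pauseCount r (m - m') K i s :=
  if_pos h

theorem starPath_of_lt_of_le (h₁ : r + unbarredCount r (m - m') K i < s + i)
    (h₂ : s + i ≤ m + r - m') : starPath r m m' d K s i = K (s + i - r) i := by
  rw [starPath, if_neg h₁.not_ge, if_pos h₂]

theorem starPath_of_lt (h₁ : r + unbarredCount r (m - m') K i < s + i)
    (h₂ : m + r - m' < s + i) : starPath r m m' d K s i = 2 * r + i - 1 - d := by
  rw [starPath, if_neg h₁.not_ge, if_neg h₂.not_ge]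

namespace IsStarFamily

theorem mono (hK : IsStarFamily r m m' d K) (hi1 : 1 ≤ i) (hid : i ≤ d) {a b : ℕ} (ha : 1 ≤ a)
    (hab : a ≤ b) (hb : b ≤ m - m') : K a i ≤ K b i :=
  monotoneOn_of_le_add_one (f := (K · i)) Set.ordConnected_Icc
    (fun k _ hk hk1 => hK.le_succ i hi1 hid k hk.1 (by simp at hk1; omega))
    ⟨ha, hab.trans hb⟩ ⟨ha.trans hab, hb⟩ hab

theorem le_add_one (hK : IsStarFamily r m m' d K) (ht1 : 1 ≤ t) (htμ : t ≤ m - m')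
    (hi1 : 1 ≤ i) (hid : i ≤ d) : i ≤ K t i + 1 := by
  have := add_sub_le_of_lt_succ (f := K t)
    (fun k hk hki => hK.lt_succ t ht1 htμ k hk (hki.trans_le hid)) hi1
  omega

theorem add_lt_two_mul (hK : IsStarFamily r m m' d K) (ht1 : 1 ≤ t) (htμ : t ≤ m - m')
    (hi1 : 1 ≤ i) (hid : i ≤ d) : K t i + (d - i) < 2 * r :=
  (add_sub_le_of_lt_succ (f := K t)
    (fun k hk hkd => hK.lt_succ t ht1 htμ k (hi1.trans hk) hkd) hid).trans_lt
    (hK.lt_two_mul t ht1 htμ d (hi1.trans hid) le_rfl)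

theorem le_unbarredCount_iff (hK : IsStarFamily r m m' d K) (hi1 : 1 ≤ i) (hid : i ≤ d)
    (ht1 : 1 ≤ t) (htμ : t ≤ m - m') : t ≤ unbarredCount r (m - m') K i ↔ K t i < r :=
  le_card_filter_Icc_iff (fun _ _ ha hab hb h => (hK.mono hi1 hid ha hab hb).trans_lt h) ht1 htμ

theorem unbarredCount_succ_le (hK : IsStarFamily r m m' d K) (hi1 : 1 ≤ i) (hid : i < d) :
    unbarredCount r (m - m') K (i + 1) ≤ unbarredCount r (m - m') K i :=
  card_le_card <| monotone_filter_right _ fun t ht h =>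
    (hK.lt_succ t (mem_Icc.1 ht).1 (mem_Icc.1 ht).2 i hi1 hid).trans h

theorem unbarredCount_eq (hK : IsStarFamily r m m' d K) (hi1 : 1 ≤ i) (him' : i + m' ≤ r) :
    unbarredCount r (m - m') K i = m - m' := by
  rw [unbarredCount, filter_true_of_mem, Nat.card_Icc, Nat.add_sub_cancel]
  intro t ht
  have := hK.add_one_le i hi1 him' t (mem_Icc.1 ht).1 (mem_Icc.1 ht).2
  omega

theorem pauseCount_le (hK : IsStarFamily r m m' d K) (hi1 : 1 ≤ i) (hid : i ≤ d) :
    pauseCount r (m - m') K i s ≤ s := by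
  refine (card_le_card fun t ht => ?_).trans_eq (Nat.card_Icc 1 s)
  simp only [mem_filter, mem_Icc] at ht ⊢
  have := hK.le_add_one ht.1.1 ht.1.2 hi1 hid
  omega

theorem pauseCount_succ_le (hK : IsStarFamily r m m' d K) (hi1 : 1 ≤ i) (hid : i < d) :
    pauseCount r (m - m') K (i + 1) s ≤ pauseCount r (m - m') K i s :=
  card_le_card <| monotone_filter_right _ fun t ht h => by
    have := hK.lt_succ t (mem_Icc.1 ht).1 (mem_Icc.1 ht).2 i hi1 hid
    omega

theorem pauseCount_eq_of_add_le (hK : IsStarFamily r m m' d K) (hi1 : 1 ≤ i)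
    (him' : i + m' ≤ r) : pauseCount r (m - m') K i m = m - m' := by
  rw [pauseCount, filter_true_of_mem, Nat.card_Icc, Nat.add_sub_cancel]
  intro t ht
  obtain ⟨ht1, htμ⟩ := mem_Icc.1 ht
  have := hK.add_one_le i hi1 him' t ht1 htμ
  omega

theorem card_pauses_le_one (hK : IsStarFamily r m m' d K) (hi1 : 1 ≤ i) (hid : i ≤ d) :
    #{t ∈ Icc 1 (m - m') | K t i < r ∧ K t i + t = s + i} ≤ 1 := by
  refine card_le_one.2 fun a ha b hb => ?_
  simp only [mem_filter, mem_Icc] at ha hb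
  rcases lt_trichotomy a b with hab | hab | hab
  · have := hK.mono hi1 hid ha.1.1 hab.le hb.1.2
    omega
  · exact hab
  · have := hK.mono hi1 hid hb.1.1 hab.le ha.1.2
    omega

theorem pauseCount_pauseTime (hK : IsStarFamily r m m' d K) (hi1 : 1 ≤ i) (hid : i ≤ d)
    (ht1 : 1 ≤ t) (htμ : t ≤ m - m') (htr : K t i < r) :
    pauseCount r (m - m') K i (pauseTime r K i t) = t - 1 := by
  have hlow := hK.le_add_one ht1 htμ hi1 hid
  have hset : {u ∈ Icc 1 (m - m') | K u i < r ∧ K u i + u < pauseTime r K i t + i} =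
      Icc 1 (t - 1) := by
    refine Finset.ext fun u => ?_
    simp only [mem_filter, mem_Icc]
    unfold pauseTime
    constructor
    · rintro ⟨⟨hu1, huμ⟩, -, hu⟩
      refine ⟨hu1, Nat.le_sub_one_of_lt (lt_of_not_ge fun htu => ?_)⟩
      have := hK.mono hi1 hid ht1 htu huμ
      omega
    · rintro ⟨hu1, hut⟩
      have := hK.mono hi1 hid hu1 (hut.trans (Nat.sub_le t 1)) htμ
      omega
  rw [pauseCount, hset, Nat.card_Icc, Nat.add_sub_cancel]

theorem starPath_lt (hK : IsStarFamily r m m' d K) (hi1 : 1 ≤ i) (hid : i ≤ d)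
    (h : s + i ≤ r + unbarredCount r (m - m') K i) : starPath r m m' d K s i < r := by
  have hδμ := unbarredCount_le (r := r) (K := K) (i := i) (m - m')
  have hpauses : #(Icc 1 (s + i - r)) ≤ pauseCount r (m - m') K i s :=
    card_le_card fun t ht => by
      simp only [mem_filter, mem_Icc] at ht ⊢
      have htr := (hK.le_unbarredCount_iff hi1 hid ht.1 (by omega)).1 (by omega)
      omega
  rw [Nat.card_Icc] at hpauses
  have := hK.pauseCount_le (s := s) hi1 hid
  rw [starPath_of_le h]
  omega

theorem le_starPath (hK : IsStarFamily r m m' d K) (hi1 : 1 ≤ i) (hid : i ≤ d) (hdr : d ≤ r)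
    (h : r + unbarredCount r (m - m') K i < s + i) : r ≤ starPath r m m' d K s i := by
  rcases le_or_gt (s + i) (m + r - m') with h₂ | h₂
  · rw [starPath_of_lt_of_le h h₂]
    by_contra htr
    have := (hK.le_unbarredCount_iff hi1 hid (t := s + i - r) (by omega) (by omega)).2 (by omega)
    omega
  · rw [starPath_of_lt h h₂]
    omega

theorem starPath_lt_two_mul (hK : IsStarFamily r m m' d K) (hi1 : 1 ≤ i) (hid : i ≤ d)
    (hdr : d ≤ r) : starPath r m m' d K s i < 2 * r := by
  by_cases h₁ : s + i ≤ r + unbarredCount r (m - m') K i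
  · have := hK.starPath_lt hi1 hid h₁
    omega
  rcases le_or_gt (s + i) (m + r - m') with h₂ | h₂
  · rw [starPath_of_lt_of_le (by omega) h₂]
    exact hK.lt_two_mul _ (by omega) (by omega) i hi1 hid
  · rw [starPath_of_lt (by omega) h₂]
    omega

theorem starPath_lt_succ (hK : IsStarFamily r m m' d K) (hi1 : 1 ≤ i) (hid : i < d)
    (hdr : d ≤ r) : starPath r m m' d K s i < starPath r m m' d K s (i + 1) := by
  have hδ := hK.unbarredCount_succ_le hi1 hid
  by_cases h₁ : s + (i + 1) ≤ r + unbarredCount r (m - m') K (i + 1)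
  · rw [starPath_of_le (by omega), starPath_of_le h₁]
    have := hK.pauseCount_succ_le (s := s) hi1 hid
    have := hK.pauseCount_le (s := s) hi1 hid.le
    omega
  by_cases h₀ : s + i ≤ r + unbarredCount r (m - m') K i
  · exact (hK.starPath_lt hi1 hid.le h₀).trans_le (hK.le_starPath (by omega) hid hdr (by omega))
  rcases le_or_gt (s + (i + 1)) (m + r - m') with h₂ | h₂
  · rw [starPath_of_lt_of_le (by omega) (by omega), starPath_of_lt_of_le (by omega) h₂]
    have := hK.mono hi1 hid.le (a := s + i - r) (b := s + (i + 1) - r) (by omega) (by omega)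
      (by omega)
    have := hK.lt_succ (s + (i + 1) - r) (by omega) (by omega) i hi1 hid
    omega
  rw [starPath_of_lt (by omega) h₂]
  rcases le_or_gt (s + i) (m + r - m') with h₃ | h₃
  · rw [starPath_of_lt_of_le (by omega) h₃]
    have := hK.add_lt_two_mul (t := s + i - r) (by omega) (by omega) hi1 hid.le
    omega
  · rw [starPath_of_lt (by omega) h₃]
    omega

theorem starPath_le_succ_of_lt (hK : IsStarFamily r m m' d K) (hi1 : 1 ≤ i) (hid : i ≤ d)
    (h : r + unbarredCount r (m - m') K i < s + i) :
    starPath r m m' d K s i ≤ starPath r m m' d K (s + 1) i := by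
  rcases le_or_gt (s + 1 + i) (m + r - m') with h₂ | h₂
  · rw [starPath_of_lt_of_le h (by omega), starPath_of_lt_of_le (by omega) h₂]
    exact hK.mono hi1 hid (by omega) (by omega) (by omega)
  rw [starPath_of_lt (by omega) h₂]
  rcases le_or_gt (s + i) (m + r - m') with h₃ | h₃
  · rw [starPath_of_lt_of_le h h₃]
    have := hK.add_lt_two_mul (t := s + i - r) (by omega) (by omega) hi1 hid
    omega
  · rw [starPath_of_lt h h₃]

theorem starPath_step (hK : IsStarFamily r m m' d K) (hi1 : 1 ≤ i) (hid : i ≤ d) (hdr : d ≤ r) :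
    (starPath r m m' d K s i + 1 < r →
      starPath r m m' d K (s + 1) i = starPath r m m' d K s i ∨
        starPath r m m' d K (s + 1) i = starPath r m m' d K s i + 1) ∧
      starPath r m m' d K s i ≤ starPath r m m' d K (s + 1) i := by
  by_cases h₁ : s + 1 + i ≤ r + unbarredCount r (m - m') K i
  · rw [starPath_of_le (by omega), starPath_of_le h₁, pauseCount_succ]
    have := hK.card_pauses_le_one (s := s) hi1 hid
    have := hK.pauseCount_le (s := s) hi1 hid
    omega
  have hnext := hK.le_starPath hi1 hid hdr (s := s + 1) (by omega)
  by_cases h₀ : s + i ≤ r + unbarredCount r (m - m') K i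
  · have := hK.starPath_lt hi1 hid h₀
    have := pauseCount_le_unbarredCount (r := r) (K := K) (i := i) (s := s) (m - m')
    rw [starPath_of_le h₀] at *
    omega
  have := hK.le_starPath hi1 hid hdr (s := s) (by omega)
  have := hK.starPath_le_succ_of_lt hi1 hid (s := s) (by omega)
  omega

theorem starPath_zero (hK : IsStarFamily r m m' d K) (hi1 : 1 ≤ i) (hid : i ≤ d) (hdr : d ≤ r) :
    starPath r m m' d K 0 i = i - 1 := by
  rw [starPath_of_le (by omega), Nat.le_zero.1 (hK.pauseCount_le hi1 hid)]
  omega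

theorem starPath_last (hK : IsStarFamily r m m' d K) (hm'm : m' ≤ m) (hi1 : 1 ≤ i)
    (hid : i ≤ d) (hdr : d ≤ r) : starPath r m m' d K m i = rowR r m' d (i - 1) := by
  by_cases him' : i + m' ≤ r
  · have := hK.unbarredCount_eq hi1 him'
    rw [starPath_of_le (by omega), hK.pauseCount_eq_of_add_le hi1 him', rowR, if_pos (by omega)]
    omega
  · have := unbarredCount_le (r := r) (K := K) (i := i) (m - m')
    rw [starPath_of_lt (by omega) (by omega), rowR, if_neg (by omega)]
    omega

theorem absV_starPath_lt (hK : IsStarFamily r m m' d K) (hi1 : 1 ≤ i) (hid : i < d)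
    (hdr : d ≤ r) (h : r ≤ starPath r m m' d K (s + 1) i) :
    absV r (starPath r m m' d K s (i + 1)) < absV r (starPath r m m' d K (s + 1) i) := by
  have h₁ : r + unbarredCount r (m - m') K i < s + 1 + i := by
    by_contra h₁
    exact (hK.starPath_lt hi1 hid.le (not_lt.1 h₁)).not_ge h
  have hδ := hK.unbarredCount_succ_le hi1 hid
  rcases le_or_gt (s + 1 + i) (m + r - m') with h₂ | h₂
  · rw [starPath_of_lt_of_le h₁ h₂] at h ⊢
    rw [starPath_of_lt_of_le (by omega) (by omega), show s + (i + 1) - r = s + 1 + i - r by omega]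
    have := hK.lt_succ (s + 1 + i - r) (by omega) (by omega) i hi1 hid
    have := hK.lt_two_mul (s + 1 + i - r) (by omega) (by omega) (i + 1) (by omega) hid
    rw [absV_of_le h, absV_of_le (by omega)]
    omega
  · rw [starPath_of_lt h₁ h₂, starPath_of_lt (by omega) (by omega), absV_of_le (by omega),
      absV_of_le (by omega)]
    omega

theorem isPath_starPath (hK : IsStarFamily r m m' d K) (hm'm : m' ≤ m) (hdr : d ≤ r) :
    IsPath r m m' d (starPath r m m' d K) :=
  ⟨fun _ _ _ hi1 hid => hK.starPath_lt_two_mul hi1 hid hdr,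
    fun _ _ _ hi1 hid => hK.starPath_lt_succ hi1 hid hdr,
    fun _ _ _ hi1 hid => hK.starPath_step hi1 hid hdr,
    fun _ hi1 hid => ⟨hK.starPath_zero hi1 hid hdr, hK.starPath_last hm'm hi1 hid hdr⟩,
    fun _ _ _ hi1 hid h => hK.absV_starPath_lt hi1 hid hdr h⟩

theorem pauseTime_strictMonoOn (hK : IsStarFamily r m m' d K) (hi1 : 1 ≤ i) (hid : i ≤ d)
    (hdr : d ≤ r) : StrictMonoOn (pauseTime r K i) (Set.Icc 1 (m - m')) := by
  rintro a ⟨ha1, haμ⟩ b ⟨hb1, hbμ⟩ hab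
  have := hK.mono hi1 hid ha1 hab.le hbμ
  have := hK.le_add_one ha1 haμ hi1 hid
  unfold pauseTime
  omega

theorem starPath_pauseTime (hK : IsStarFamily r m m' d K) (hi1 : 1 ≤ i) (hid : i ≤ d)
    (hdr : d ≤ r) (ht1 : 1 ≤ t) (htμ : t ≤ m - m') :
    starPath r m m' d K (pauseTime r K i t) i = K t i := by
  have hunbarred := hK.le_unbarredCount_iff hi1 hid ht1 htμ
  by_cases htr : K t i < r
  · have := hK.le_add_one ht1 htμ hi1 hid
    rw [starPath_of_le (by unfold pauseTime; omega), hK.pauseCount_pauseTime hi1 hid ht1 htμ htr]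
    unfold pauseTime
    omega
  · rw [starPath_of_lt_of_le (by unfold pauseTime; omega) (by unfold pauseTime; omega)]
    congr 1
    unfold pauseTime
    omega

theorem pauseTime_eq_iff_of_le (hK : IsStarFamily r m m' d K) (hi1 : 1 ≤ i) (hid : i ≤ d)
    (hdr : d ≤ r) (ht1 : 1 ≤ t) (htμ : t ≤ m - m')
    (h : r + unbarredCount r (m - m') K i ≤ s + i) :
    pauseTime r K i t = s ↔ unbarredCount r (m - m') K i < t ∧ r + t = s + i := by
  have hunbarred := hK.le_unbarredCount_iff hi1 hid ht1 htμ
  have := hK.le_add_one ht1 htμ hi1 hid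
  unfold pauseTime
  omega

theorem starPath_eq_succ_iff (hK : IsStarFamily r m m' d K) (hi1 : 1 ≤ i) (hid : i ≤ d)
    (h : s + 1 + i ≤ r + unbarredCount r (m - m') K i) :
    starPath r m m' d K s i = starPath r m m' d K (s + 1) i ↔
      ∃ t ∈ Icc 1 (m - m'), pauseTime r K i t = s := by
  have hpause : (∃ t ∈ Icc 1 (m - m'), pauseTime r K i t = s) ↔
      0 < #{t ∈ Icc 1 (m - m') | K t i < r ∧ K t i + t = s + i} := by
    rw [card_pos]
    constructor
    · rintro ⟨t, ht, hts⟩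
      obtain ⟨ht1, htμ⟩ := mem_Icc.1 ht
      have := hK.le_unbarredCount_iff hi1 hid ht1 htμ
      have := hK.le_add_one ht1 htμ hi1 hid
      unfold pauseTime at hts
      exact ⟨t, mem_filter.2 ⟨ht, by omega, by omega⟩⟩
    · rintro ⟨t, ht⟩
      obtain ⟨ht, htr, hts⟩ := mem_filter.1 ht
      exact ⟨t, ht, by unfold pauseTime; omega⟩
  rw [hpause, starPath_of_le (by omega), starPath_of_le h, pauseCount_succ]
  have := hK.card_pauses_le_one (s := s) hi1 hid
  have := hK.pauseCount_le (s := s) hi1 hid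
  omega

theorem mem_lSet_starPath_of_add_le (hK : IsStarFamily r m m' d K) (hm'm : m' ≤ m)
    (hi1 : 1 ≤ i) (hid : i ≤ d) (hdr : d ≤ r) (him' : i + m' ≤ r) :
    s ∈ lSet r m m' (starPath r m m' d K) i ↔ ∃ t ∈ Icc 1 (m - m'), pauseTime r K i t = s := by
  have hδ := hK.unbarredCount_eq hi1 him'
  rw [lSet, if_pos him', mem_filter, mem_range]
  constructor
  · rintro ⟨hsm, hflat⟩
    exact (hK.starPath_eq_succ_iff hi1 hid (by omega)).1 hflat
  · rintro ⟨t, ht, rfl⟩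
    obtain ⟨ht1, htμ⟩ := mem_Icc.1 ht
    have := hK.add_one_le i hi1 him' t ht1 htμ
    have hlt : pauseTime r K i t < m := by
      unfold pauseTime
      omega
    exact ⟨hlt, (hK.starPath_eq_succ_iff hi1 hid (by omega)).2 ⟨t, ht, rfl⟩⟩

theorem mem_lSet_starPath_of_lt (hK : IsStarFamily r m m' d K) (hm'm : m' ≤ m) (hi1 : 1 ≤ i)
    (hid : i ≤ d) (hdr : d ≤ r) (him' : r < i + m') :
    s ∈ lSet r m m' (starPath r m m' d K) i ↔ ∃ t ∈ Icc 1 (m - m'), pauseTime r K i t = s := by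
  have hδμ := unbarredCount_le (r := r) (K := K) (i := i) (m - m')
  rw [lSet, if_neg him'.not_ge, mem_filter, mem_range]
  rcases lt_or_ge (s + i) (r + unbarredCount r (m - m') K i) with h | h
  · have hA := hK.starPath_lt hi1 hid (s := s) h.le
    rw [← hK.starPath_eq_succ_iff hi1 hid (by omega)]
    constructor
    · rintro ⟨-, ⟨-, hflat⟩ | hge⟩
      · exact hflat
      · omega
    · intro hflat
      exact ⟨by omega, Or.inl ⟨hA, hflat⟩⟩
  rw [exists_congr fun t => and_congr_right fun ht =>
    hK.pauseTime_eq_iff_of_le hi1 hid hdr (mem_Icc.1 ht).1 (mem_Icc.1 ht).2 h]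
  rcases h.eq_or_lt with h | h
  · have := hK.starPath_lt hi1 hid (s := s) h.ge
    have := hK.le_starPath hi1 hid hdr (s := s + 1) (by omega)
    constructor
    · rintro ⟨-, ⟨-, hflat⟩ | hge⟩ <;> omega
    · rintro ⟨t, -, ht, hts⟩
      omega
  · have hA := hK.le_starPath hi1 hid hdr (s := s) h
    constructor
    · rintro ⟨hs, -⟩
      exact ⟨s + i - r, mem_Icc.2 ⟨by omega, by omega⟩, by omega, by omega⟩
    · rintro ⟨t, ht, -, hts⟩
      have := (mem_Icc.1 ht).2
      exact ⟨by omega, Or.inr hA⟩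

theorem lSet_starPath (hK : IsStarFamily r m m' d K) (hm'm : m' ≤ m) (hi1 : 1 ≤ i)
    (hid : i ≤ d) (hdr : d ≤ r) :
    lSet r m m' (starPath r m m' d K) i = (Icc 1 (m - m')).image (pauseTime r K i) := by
  ext s
  rw [mem_image]
  rcases le_or_gt (i + m') r with him' | him'
  · exact hK.mem_lSet_starPath_of_add_le hm'm hi1 hid hdr him'
  · exact hK.mem_lSet_starPath_of_lt hm'm hi1 hid hdr him'

theorem kv_starPath (hK : IsStarFamily r m m' d K) (hm'm : m' ≤ m) (hi1 : 1 ≤ i) (hid : i ≤ d)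
    (hdr : d ≤ r) (hs1 : 1 ≤ s) (hsμ : s ≤ m - m') :
    kv r m m' (starPath r m m' d K) i s = K s i := by
  rw [kv, lv, hK.lSet_starPath hm'm hi1 hid hdr,
    getD_sort_image_Icc (hK.pauseTime_strictMonoOn hi1 hid hdr) hs1 hsμ,
    hK.starPath_pauseTime hi1 hid hdr hs1 hsμ]

end IsStarFamily

theorem star_family_realized_by_path_general
    (r m m' d : ℕ) (hm'm : m' ≤ m) (hdr : d ≤ r)
    (K : ℕ → ℕ → ℕ)
    (hKrange : ∀ s, 1 ≤ s → s ≤ m - m' → ∀ i, 1 ≤ i → i ≤ d → K s i < 2*r)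
    (hKinc : ∀ s, 1 ≤ s → s ≤ m - m' → ∀ i, 1 ≤ i → i < d → K s i < K s (i+1))
    (hKmono : ∀ i, 1 ≤ i → i ≤ d → ∀ s, 1 ≤ s → s < m - m' → K s i ≤ K (s+1) i)
    (hKbd : ∀ i, 1 ≤ i → i + m' ≤ r → ∀ s, 1 ≤ s → s ≤ m - m' → K s i + 1 ≤ m' + i) :
    ∃ A : ℕ → ℕ → ℕ, IsPath r m m' d A ∧
      ∀ s, 1 ≤ s → s ≤ m - m' → ∀ i, 1 ≤ i → i ≤ d →
        kv r m m' A i s = K s i := by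
  have hK : IsStarFamily r m m' d K := ⟨hKrange, hKinc, hKmono, hKbd⟩
  exact ⟨starPath r m m' d K, hK.isPath_starPath hm'm hdr,
    fun s hs1 hsμ i hi1 hid => hK.kv_starPath hm'm hi1 hid hdr hs1 hsμ⟩

theorem star_family_realized_by_path
    (r m m' d : ℕ) (hr : 2 ≤ r) (hm'1 : 1 ≤ m') (hm'm : m' ≤ m) (hmr : m ≤ r)
    (hd1 : 1 ≤ d) (hdr : d ≤ r) (hbig : r < m' + d)
    (K : ℕ → ℕ → ℕ)
    (hKrange : ∀ s, 1 ≤ s → s ≤ m - m' → ∀ i, 1 ≤ i → i ≤ d → K s i < 2*r)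
    (hKinc : ∀ s, 1 ≤ s → s ≤ m - m' → ∀ i, 1 ≤ i → i < d → K s i < K s (i+1))
    (hKmono : ∀ i, 1 ≤ i → i ≤ d → ∀ s, 1 ≤ s → s < m - m' → K s i ≤ K (s+1) i)
    (hKbd : ∀ i, 1 ≤ i → i + m' ≤ r → ∀ s, 1 ≤ s → s ≤ m - m' → K s i + 1 ≤ m' + i) :
    ∃ A : ℕ → ℕ → ℕ, IsPath r m m' d A ∧
      ∀ s, 1 ≤ s → s ≤ m - m' → ∀ i, 1 ≤ i → i ≤ d →
        kv r m m' A i s = K s i :=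
  star_family_realized_by_path_general r m m' d hm'm hdr K hKrange hKinc hKmono hKbd

end CTypeMinors
end
end

section
/- Fix integers m ≥ 1 and 1 ≤ i_n ≤ r. Let Y = (Y_{s,l}) be a family of nonzero complex numbers indexed by 1 ≤ s ≤ m−1, 1 ≤ l ≤ r together with s = m, 1 ≤ l ≤ i_n, with the conventions Y_{s,0} = 1 and Y_{m,ξ} = 1 for ξ > i_n. For each index (s,l) of the family, define Φ_{s,l}(Y) := (Y_{s+1,l−1}Y_{s+2,l−1}⋯Y_{m,l−1})·(Y_{s,l+1}Y_{s+1,l+1}⋯Y_{m,l+1}) / ( Y_{s,l}·(Y_{s+1,l}⋯Y_{m,l})² ) if 1 ≤ l < r, and Φ_{s,r}(Y) := (Y_{s+1,r−1}⋯Y_{m,r−1})² / ( Y_{s,r}·(Y_{s+1,r}⋯Y_{m,r})² ). Then the following identity of matrices in M_{2r}(ℂ) holds: x_{−1}(Y_{1,1})⋯x_{−r}(Y_{1,r})·x_{−1}(Y_{2,1})⋯x_{−r}(Y_{2,r})⋯x_{−1}(Y_{m,1})⋯x_{−i_n}(Y_{m,i_n}) = D · y_1(Φ_{1,1}(Y))y_2(Φ_{1,2}(Y))⋯y_r(Φ_{1,r}(Y))⋯y_1(Φ_{m,1}(Y))⋯y_{i_n}(Φ_{m,i_n}(Y)),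 where D := ( ∏_{s=1}^{m−1} ∏_{l=1}^{r} α_l^∨(Y_{s,l})^{−1} ) · ∏_{l=1}^{i_n} α_l^∨(Y_{m,l})^{−1} (a product of commuting diagonal matrices). (This is the factorization underlying the biregular isomorphism x̄^G_𝐢 of Proposition 3.3.) -/
/-!
Write `x_{-i}(t) = y_i(t) α_i^∨(t⁻¹)` and move every `α^∨` to the left. Passing
`α_j^∨(c)` through `y_i(t)` rescales the parameter:
`y_i(t) α_j^∨(c) = α_j^∨(c) y_i(t c^⟨α_i, α_j^∨⟩)`.
Within one row this turns the parameters into `Y_{s,l+1} / Y_{s,l}`, and each later row `s'`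
then multiplies the parameter of `y_l` by `Y_{s',l-1} Y_{s',l+1} / Y_{s',l}²`
(by `Y_{s',r-1}² / Y_{s',r}²` when `l = r`); these are the products in `Φ_{s,l}`.
The last row is shorter, but its missing `α^∨` factors are `α^∨(1) = 1` because `Y_{m,ξ} = 1`
beyond `i_n`, so it twists the earlier rows like a full one.
-/

noncomputable section
open Matrix BigOperators

namespace CTypeMinors

/-- `Φ_{s,l}(Y)` from the proof of Proposition 3.3 (formula (3.4)). -/
def Phi (r m : ℕ) (Y : ℕ → ℕ → ℂ) (s l : ℕ) : ℂ :=
  if l < r then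
    ((∏ t ∈ Finset.Icc (s+1) m, Y t (l-1)) * (∏ t ∈ Finset.Icc s m, Y t (l+1))) /
      (Y s l * (∏ t ∈ Finset.Icc (s+1) m, Y t l) ^ 2)
  else
    (∏ t ∈ Finset.Icc (s+1) m, Y t (r-1)) ^ 2 /
      (Y s r * (∏ t ∈ Finset.Icc (s+1) m, Y t r) ^ 2)

lemma oprod_succ {N : ℕ} (g : ℕ → Matrix (Fin N) (Fin N) ℂ) (n : ℕ) :
    oprod g (n + 1) = oprod g n * g (n + 1) := by
  simp [oprod, List.range_succ]

lemma oprod_congr {N n : ℕ} {g g' : ℕ → Matrix (Fin N) (Fin N) ℂ}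
    (h : ∀ p, 1 ≤ p → p ≤ n → g p = g' p) : oprod g n = oprod g' n := by
  induction n with
  | zero => rfl
  | succ n ih =>
    rw [oprod_succ, oprod_succ, ih fun p h1 h2 => h p h1 (by omega), h (n + 1) (by omega) le_rfl]

lemma oprod_mul_eq_mul_oprod {N n : ℕ} {g g' : ℕ → Matrix (Fin N) (Fin N) ℂ}
    {D : Matrix (Fin N) (Fin N) ℂ} (h : ∀ p, 1 ≤ p → p ≤ n → g p * D = D * g' p) :
    oprod g n * D = D * oprod g' n := by
  induction n with
  | zero => simp [oprod]
  | succ n ih =>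
    rw [oprod_succ, oprod_succ, mul_assoc, h (n + 1) (by omega) le_rfl, ← mul_assoc,
      ih fun p h1 h2 => h p h1 (by omega), mul_assoc]

lemma oprod_eq_of_eq_one {N k n : ℕ} {g : ℕ → Matrix (Fin N) (Fin N) ℂ} (hkn : k ≤ n)
    (h : ∀ p, k < p → p ≤ n → g p = 1) : oprod g n = oprod g k := by
  induction n, hkn using Nat.le_induction with
  | base => rfl
  | succ n hkn ih => rw [oprod_succ, h (n + 1) (by omega) le_rfl, mul_one,
      ih fun p h1 h2 => h p h1 (by omega)]

lemma oprod_staircase_succ {N r m inn : ℕ} (g : ℕ → ℕ → Matrix (Fin N) (Fin N) ℂ) :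
    oprod (fun s => oprod (g s) (if s = m + 1 then inn else r)) (m + 1) =
      oprod (fun s => oprod (g s) r) m * oprod (g (m + 1)) inn := by
  rw [oprod_succ, if_pos rfl]
  congr 1
  exact oprod_congr fun s _ hs => by rw [if_neg (by omega)]

/-- `⟨α_i, α_j^∨⟩` for type `C_r`: Mathlib's `CartanMatrix.C r` shifted to the indices
`1, …, r`. -/
def cartan (r i j : ℕ) : ℤ :=
  if h : 1 ≤ i ∧ i ≤ r ∧ 1 ≤ j ∧ j ≤ r then
    CartanMatrix.C r ⟨i - 1, by omega⟩ ⟨j - 1, by omega⟩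
  else 0

lemma fMat_mul_alMat {r i j : ℕ} (hi : 1 ≤ i) (hir : i ≤ r) (hj : 1 ≤ j) (hjr : j ≤ r)
    {c : ℂ} (hc : c ≠ 0) :
    fMat r i * alMat r j c = c ^ cartan r i j • (alMat r j c * fMat r i) := by
  ext k l
  simp only [alMat, fMat, cartan, CartanMatrix.C, mul_diagonal, diagonal_mul, Matrix.smul_apply,
    of_apply, smul_eq_mul, dif_pos (show 1 ≤ i ∧ i ≤ r ∧ 1 ≤ j ∧ j ≤ r from ⟨hi, hir, hj, hjr⟩),
    Fin.mk.injEq]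
  by_cases hf : ((l : ℕ) + 1 = i ∧ (k : ℕ) = i) ∨ ((l : ℕ) + i + 1 = 2 * r ∧ (k : ℕ) + i = 2 * r)
  · rw [if_pos hf]
    rcases hf with ⟨h1, h2⟩ | ⟨h1, h2⟩ <;> split_ifs <;>
      first | (exfalso; omega) | (simp only [_root_.zpow_neg, zpow_ofNat]; field_simp)
  · rw [if_neg hf]; ring

lemma cartan_self {r i : ℕ} (hi : 1 ≤ i) (hir : i ≤ r) : cartan r i i = 2 := by
  simp [cartan, hi, hir]

lemma cartan_succ_right {r i : ℕ} (hi : 1 ≤ i) (hir : i + 1 ≤ r) : cartan r i (i + 1) = -1 := by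
  simp [cartan, CartanMatrix.C, hi, hir, show i ≤ r by omega]
  omega

lemma cartan_eq_zero {r i j : ℕ} (hij : i + 1 < j) : cartan r i j = 0 := by
  unfold cartan
  split_ifs
  · simp [CartanMatrix.C]; omega
  · rfl

lemma yMat_mul_alMat {r i j : ℕ} (hi : 1 ≤ i) (hir : i ≤ r) (hj : 1 ≤ j) (hjr : j ≤ r)
    {c : ℂ} (hc : c ≠ 0) (t : ℂ) :
    yMat r i t * alMat r j c = alMat r j c * yMat r i (t * c ^ cartan r i j) := by
  rw [yMat, yMat, add_mul, mul_add, one_mul, mul_one, smul_mul_assoc,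
    fMat_mul_alMat hi hir hj hjr hc, smul_smul, mul_smul_comm]

lemma alMat_one (r j : ℕ) : alMat r j 1 = 1 := by
  simp [alMat, ← diagonal_one]

lemma alMat_inv {r j : ℕ} {c : ℂ} (hc : c ≠ 0) : (alMat r j c)⁻¹ = alMat r j c⁻¹ := by
  refine inv_eq_right_inv ?_
  rw [alMat, alMat, diagonal_mul_diagonal, ← diagonal_one]
  congr 1
  funext k
  split_ifs <;> simp [hc]

lemma yMat_mul_oprod_alMat {r n i : ℕ} (hn : n ≤ r) (hi : 1 ≤ i) (hir : i ≤ r) {c : ℕ → ℂ}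
    (hc : ∀ l, 1 ≤ l → l ≤ n → c l ≠ 0) (t : ℂ) :
    yMat r i t * oprod (fun l => alMat r l (c l)) n =
      oprod (fun l => alMat r l (c l)) n *
        yMat r i (t * ∏ l ∈ Finset.Icc 1 n, c l ^ cartan r i l) := by
  induction n with
  | zero => simp [oprod]
  | succ n ih =>
    rw [oprod_succ, ← mul_assoc, ih (by omega) fun l h1 h2 => hc l h1 (by omega), mul_assoc,
      yMat_mul_alMat hi hir (by omega) hn (hc (n + 1) (by omega) le_rfl),
      Finset.prod_Icc_succ_top (by omega), mul_assoc, mul_assoc]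

lemma oprod_xmMat {r n : ℕ} (hn : n ≤ r) {c : ℕ → ℂ} (hc : ∀ l, 1 ≤ l → l ≤ n → c l ≠ 0) :
    oprod (fun l => xmMat r l (c l)) n =
      oprod (fun l => alMat r l (c l)⁻¹) n *
        oprod (fun l => yMat r l ((if l < n then c (l + 1) else 1) / c l)) n := by
  induction n with
  | zero => simp [oprod]
  | succ n ih =>
    have hcn : c (n + 1) ≠ 0 := hc (n + 1) (by omega) le_rfl
    have htwist : ∀ l, 1 ≤ l → l ≤ n →
        yMat r l ((if l < n then c (l + 1) else 1) / c l) * alMat r (n + 1) (c (n + 1))⁻¹ =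
          alMat r (n + 1) (c (n + 1))⁻¹ *
            yMat r l ((if l < n + 1 then c (l + 1) else 1) / c l) := by
      intro l hl hln
      rw [yMat_mul_alMat hl (by omega) (by omega) hn (inv_ne_zero hcn)]
      congr 2
      rcases Nat.lt_or_eq_of_le hln with hln | rfl
      · rw [cartan_eq_zero (by omega), if_pos hln, if_pos (by omega), zpow_zero, mul_one]
      · rw [cartan_succ_right hl (by omega), if_neg (lt_irrefl l), if_pos (by omega)]
        simp [div_eq_mul_inv, mul_comm]
    calc oprod (fun l => xmMat r l (c l)) (n + 1)
        = oprod (fun l => alMat r l (c l)⁻¹) n *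
            (oprod (fun l => yMat r l ((if l < n then c (l + 1) else 1) / c l)) n *
              alMat r (n + 1) (c (n + 1))⁻¹) * yMat r (n + 1) (1 / c (n + 1)) := by
          rw [oprod_succ, ih (by omega) fun l h1 h2 => hc l h1 (by omega), xmMat,
            ← mul_assoc, mul_assoc _ (yMat _ _ _),
            yMat_mul_alMat (by omega) hn (by omega) hn (inv_ne_zero hcn),
            cartan_self (by omega) hn]
          field_simp
          simp only [mul_assoc]
      _ = _ := by
          rw [oprod_mul_eq_mul_oprod htwist, oprod_succ, oprod_succ (fun l => yMat _ _ _),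
            if_neg (lt_irrefl _)]
          simp only [mul_assoc]

lemma prod_zpow_cartan {r i : ℕ} (hi : 1 ≤ i) (hir : i ≤ r) {c : ℕ → ℂ} (hc0 : c 0 = 1) :
    ∏ l ∈ Finset.Icc 1 r, c l ^ cartan r i l =
      c i ^ 2 * (c (i - 1) ^ (if i = r then 2 else 1))⁻¹ *
        (if i < r then (c (i + 1))⁻¹ else 1) := by
  have hterm : ∀ l ∈ Finset.Icc 1 r, c l ^ cartan r i l =
      (if l = i then c l ^ 2 else 1) *
        (if l = i - 1 then (c l ^ (if i = r then 2 else 1))⁻¹ else 1) *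
        (if l = i + 1 then (c l)⁻¹ else 1) := by
    intro l hl
    rw [Finset.mem_Icc] at hl
    simp only [cartan, CartanMatrix.C, dif_pos (show 1 ≤ i ∧ i ≤ r ∧ 1 ≤ l ∧ l ≤ r by omega),
      of_apply, Fin.mk.injEq]
    split_ifs <;> first | (exfalso; omega) | simp [_root_.zpow_neg]
  rw [Finset.prod_congr rfl hterm, Finset.prod_mul_distrib, Finset.prod_mul_distrib,
    Finset.prod_ite_eq', Finset.prod_ite_eq', Finset.prod_ite_eq']
  simp only [Finset.mem_Icc]
  rcases Nat.lt_or_ge 1 i with h1 | h1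
  · rw [if_pos ⟨hi, hir⟩, if_pos ⟨by omega, by omega⟩]
    split_ifs <;> first | (exfalso; omega) | rfl
  · obtain rfl : i = 1 := by omega
    rw [if_pos ⟨le_rfl, hir⟩, if_neg (by omega), Nat.sub_self, hc0]
    split_ifs <;> first | (exfalso; omega) | simp

lemma Phi_succ {r m s l : ℕ} {Y : ℕ → ℕ → ℂ} (hY0 : Y (m + 1) 0 = 1) (hsm : s ≤ m)
    (hl : 1 ≤ l) (hlr : l ≤ r) :
    Phi r (m + 1) Y s l =
      Phi r m Y s l * ∏ l' ∈ Finset.Icc 1 r, (Y (m + 1) l')⁻¹ ^ cartan r l l' := by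
  rw [prod_zpow_cartan hl hlr (by simp [hY0])]
  unfold Phi
  split_ifs with h1 h2 h2
  · omega
  · rw [Finset.prod_Icc_succ_top (by omega), Finset.prod_Icc_succ_top (by omega),
      Finset.prod_Icc_succ_top (by omega)]
    simp only [inv_pow, inv_inv]
    ring
  · obtain rfl : l = r := by omega
    rw [Finset.prod_Icc_succ_top (by omega), Finset.prod_Icc_succ_top (by omega)]
    simp only [inv_pow, inv_inv]
    ring
  · omega

lemma Phi_self {r m l : ℕ} {Y : ℕ → ℕ → ℂ} (hlr : l ≤ r) :
    Phi r m Y m l = (if l < r then Y m (l + 1) else 1) / Y m l := by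
  unfold Phi
  split_ifs with h
  · simp
  · obtain rfl : l = r := by omega
    simp

lemma Phi_self_of_eq_one {r m inn l : ℕ} {Y : ℕ → ℕ → ℂ} (hinn : inn ≤ r)
    (hYm : ∀ l, inn < l → l ≤ r → Y m l = 1) (hl : l ≤ inn) :
    Phi r m Y m l = (if l < inn then Y m (l + 1) else 1) / Y m l := by
  rw [Phi_self (by omega)]
  rcases Nat.lt_or_eq_of_le hl with hl | rfl
  · rw [if_pos hl, if_pos (by omega)]
  · rw [if_neg (lt_irrefl _)]
    split_ifs with h
    · rw [hYm (l + 1) (by omega) h]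
    · rfl

lemma oprod_oprod_yMat_Phi_mul_oprod_alMat {r m : ℕ} {Y : ℕ → ℕ → ℂ}
    (hY0 : Y (m + 1) 0 = 1) (hYne : ∀ l, 1 ≤ l → l ≤ r → Y (m + 1) l ≠ 0) :
    oprod (fun s => oprod (fun l => yMat r l (Phi r m Y s l)) r) m *
        oprod (fun l => alMat r l (Y (m + 1) l)⁻¹) r =
      oprod (fun l => alMat r l (Y (m + 1) l)⁻¹) r *
        oprod (fun s => oprod (fun l => yMat r l (Phi r (m + 1) Y s l)) r) m := by
  refine oprod_mul_eq_mul_oprod fun s _ hs => oprod_mul_eq_mul_oprod fun l hl hlr => ?_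
  rw [yMat_mul_oprod_alMat le_rfl hl hlr fun l' h1 h2 => inv_ne_zero (hYne l' h1 h2),
    Phi_succ hY0 hs hl hlr]

lemma oprod_staircase_xmMat {r m inn : ℕ} (hinn : inn ≤ r) {Y : ℕ → ℕ → ℂ}
    (hY0 : ∀ s, Y s 0 = 1) (hYm : ∀ l, inn < l → l ≤ r → Y m l = 1)
    (hYne : ∀ s l, 1 ≤ s → s ≤ m → 1 ≤ l → l ≤ r → Y s l ≠ 0) :
    oprod (fun s => oprod (fun l => xmMat r l (Y s l)) (if s = m then inn else r)) m =
      oprod (fun s => oprod (fun l => alMat r l (Y s l)⁻¹) (if s = m then inn else r)) m *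
        oprod (fun s => oprod (fun l => yMat r l (Phi r m Y s l))
          (if s = m then inn else r)) m := by
  induction m generalizing inn with
  | zero => simp [oprod]
  | succ m ih =>
    have hrect := ih le_rfl (fun l h1 h2 => absurd h2 (by omega))
      fun s l h1 h2 => hYne s l h1 (by omega)
    simp only [ite_self] at hrect
    have hlast : ∀ l, 1 ≤ l → l ≤ r → Y (m + 1) l ≠ 0 :=
      fun l => hYne (m + 1) l (by omega) le_rfl
    have hrow_al : oprod (fun l => alMat r l (Y (m + 1) l)⁻¹) inn =
        oprod (fun l => alMat r l (Y (m + 1) l)⁻¹) r :=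
      (oprod_eq_of_eq_one hinn fun l h1 h2 => by rw [hYm l h1 h2, inv_one, alMat_one]).symm
    have hrow_y : oprod (fun l => yMat r l
          ((if l < inn then Y (m + 1) (l + 1) else 1) / Y (m + 1) l)) inn =
        oprod (fun l => yMat r l (Phi r (m + 1) Y (m + 1) l)) inn :=
      oprod_congr fun l _ hl => by rw [Phi_self_of_eq_one hinn hYm hl]
    rw [oprod_staircase_succ, oprod_staircase_succ, oprod_staircase_succ, hrect,
      oprod_xmMat hinn fun l h1 h2 => hlast l h1 (by omega), hrow_al, hrow_y,
      mul_assoc (oprod _ m), ← mul_assoc (oprod _ m) (oprod _ r),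
      oprod_oprod_yMat_Phi_mul_oprod_alMat (hY0 _) hlast]
    simp only [mul_assoc]

theorem factorization_xL_eq_D_mul_y_general
    (r m inn : ℕ) (hinnr : inn ≤ r)
    (Y : ℕ → ℕ → ℂ)
    (hY0 : ∀ s, Y s 0 = 1) (hYm : ∀ l, inn < l → Y m l = 1)
    (hYne : ∀ s l, 1 ≤ s → s ≤ m → 1 ≤ l → l ≤ r → Y s l ≠ 0) :
    oprod (fun s => oprod (fun l => xmMat r l (Y s l)) (if s = m then inn else r)) m =
    (oprod (fun s => oprod (fun l => (alMat r l (Y s l))⁻¹) (if s = m then inn else r)) m) *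
      oprod (fun s =>
        oprod (fun l => yMat r l (Phi r m Y s l)) (if s = m then inn else r)) m := by
  rw [oprod_staircase_xmMat hinnr hY0 (fun l h _ => hYm l h) hYne]
  congr 1
  refine oprod_congr fun s hs hsm => oprod_congr fun l hl hlr => ?_
  rw [alMat_inv (hYne s l hs hsm hl (by split_ifs at hlr <;> omega))]

theorem factorization_xL_eq_D_mul_y
    (r m inn : ℕ) (hr : 2 ≤ r) (hm : 1 ≤ m) (hmr : m ≤ r)
    (hinn1 : 1 ≤ inn) (hinnr : inn ≤ r)
    (Y : ℕ → ℕ → ℂ)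
    (hY0 : ∀ s, Y s 0 = 1) (hYm : ∀ l, inn < l → Y m l = 1)
    (hYne : ∀ s l, 1 ≤ s → s ≤ m → 1 ≤ l → l ≤ r → Y s l ≠ 0) :
    oprod (fun s => oprod (fun l => xmMat r l (Y s l)) (if s = m then inn else r)) m =
    (oprod (fun s => oprod (fun l => (alMat r l (Y s l))⁻¹) (if s = m then inn else r)) m) *
      oprod (fun s =>
        oprod (fun l => yMat r l (Phi r m Y s l)) (if s = m then inn else r)) m :=
  factorization_xL_eq_D_mul_y_general r m inn hinnr Y hY0 hYm hYne

end CTypeMinors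
end
end
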